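/- arXiv:1210.2457 — 2 statements merged into one kernel-verified Lean document; each statement's English description precedes it below -/
import Mathlib

section
/- Let w ∈ V⁺ be a nonempty finite word with LAR(w) = v_k v_{k−1} ⋯ v_1, and let F ⊆ V. Then Score_F(w) > 0 if and only if F = {v_1, …, v_i} for some i with 1 ≤ i ≤ k. -/
/-!
Inside the longest suffix of `w` over the alphabet `F`, the accumulator collects the letters read
since the last increment, and the score is incremented exactly when they would make up all of `F`.
So `Score_F(w) > 0` iff `F` is nonempty and `F = occ(s)` for a suffix `s` of `w`. The family of the
sets `occ(s)`, `s` a suffix, is the same for `w` and `LAR(w)`: appending `v` to either word maps it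
to `{∅} ∪ {S ∪ {v}}`, and erasing the earlier `v` from `LAR(w)` leaves the sets `S ∪ {v}` unchanged.
-/

variable {V : Type*}

/-- One step of the score/accumulator update: reading letter `v` after having
score/accumulator pair `s` for the set `F`. -/
def mgStep [DecidableEq V] (F : Finset V) (s : ℕ × Finset V) (v : V) : ℕ × Finset V :=
  if v ∈ F then
    if s.2 = F.erase v then (s.1 + 1, (∅ : Finset V)) else (s.1, insert v s.2)
  else (0, (∅ : Finset V))

/-- `scoreAcc F w = (Score_F(w), Acc_F(w))` for a (nonempty) finite word `w`. -/
def scoreAcc [DecidableEq V] (F : Finset V) (w : List V) : ℕ × Finset V :=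
  w.foldl (mgStep F) (0, ∅)

variable {V : Type*}

/-- One step of the latest-appearance-record update. -/
def larStep [DecidableEq V] (ℓ : List V) (v : V) : List V := ℓ.erase v ++ [v]

/-- The latest appearance record `LAR(w)` of a finite word. -/
def LARof [DecidableEq V] (w : List V) : List V := w.foldl larStep []

section

variable [DecidableEq V]

theorem scoreAcc_concat (F : Finset V) (w : List V) (v : V) :
    scoreAcc F (w ++ [v]) = mgStep F (scoreAcc F w) v := by
  simp [scoreAcc, List.foldl_append]

theorem LARof_concat (w : List V) (v : V) : LARof (w ++ [v]) = (LARof w).erase v ++ [v] := by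
  simp [LARof, List.foldl_append, larStep]

def suffixOccs (l : List V) : Set (Finset V) := {S | ∃ s, s <:+ l ∧ s.toFinset = S}

theorem empty_mem_suffixOccs (l : List V) : ∅ ∈ suffixOccs l :=
  ⟨[], List.nil_suffix, rfl⟩

theorem suffixOccs_cons (a : V) (l : List V) :
    suffixOccs (a :: l) = insert (insert a l.toFinset) (suffixOccs l) := by
  ext S
  simp [suffixOccs, List.suffix_cons_iff, or_and_right, exists_or, eq_comm]

theorem suffixOccs_concat (l : List V) (v : V) :
    suffixOccs (l ++ [v]) = insert ∅ (insert v '' suffixOccs l) := by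
  ext S
  simp [suffixOccs, List.suffix_concat_iff, or_and_right, exists_or, eq_comm]

theorem image_insert_suffixOccs_append_cons (v : V) (p q : List V) :
    insert v '' suffixOccs (p ++ v :: q) = insert v '' suffixOccs (p ++ q) := by
  induction p with
  | nil =>
    rw [List.nil_append, List.nil_append, suffixOccs_cons, Set.image_insert_eq,
      Finset.insert_idem]
    exact Set.insert_eq_of_mem (Set.mem_image_of_mem _ ⟨q, List.suffix_refl q, rfl⟩)
  | cons a p ih =>
    simp only [List.cons_append, suffixOccs_cons, Set.image_insert_eq, ih]
    congr 1
    simp [Finset.union_insert, Finset.insert_comm v a]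

theorem image_insert_suffixOccs_erase (v : V) (l : List V) :
    insert v '' suffixOccs (l.erase v) = insert v '' suffixOccs l := by
  by_cases hv : v ∈ l
  · obtain ⟨p, q, -, rfl, herase⟩ := List.exists_erase_eq hv
    rw [herase, image_insert_suffixOccs_append_cons]
  · rw [List.erase_of_not_mem hv]

theorem suffixOccs_LARof (w : List V) : suffixOccs (LARof w) = suffixOccs w := by
  induction w using List.reverseRecOn with
  | nil => rfl
  | append_singleton w v ih =>
    rw [LARof_concat, suffixOccs_concat, suffixOccs_concat, image_insert_suffixOccs_erase, ih]

theorem scoreAcc_empty (w : List V) : scoreAcc ∅ w = (0, ∅) := by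
  rcases List.eq_nil_or_concat w with rfl | ⟨w, v, rfl⟩
  · rfl
  · simp [scoreAcc_concat, mgStep]

theorem scoreAcc_snd_ssubset {F : Finset V} (hF : F.Nonempty) (w : List V) :
    (scoreAcc F w).2 ⊂ F := by
  induction w using List.reverseRecOn with
  | nil => exact hF.empty_ssubset
  | append_singleton w v ih =>
    rw [scoreAcc_concat, mgStep]
    split_ifs with hvF hacc
    · exact hF.empty_ssubset
    · by_cases hvA : v ∈ (scoreAcc F w).2
      · rwa [Finset.insert_eq_of_mem hvA]
      refine Finset.ssubset_iff_subset_ne.2 ⟨Finset.insert_subset hvF ih.subset, fun h => hacc ?_⟩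
      exact (Finset.erase_insert hvA).symm.trans (congrArg (Finset.erase · v) h)
    · exact hF.empty_ssubset

-- While the score is `0`, the accumulator is the set of letters of the longest suffix over `F`.
theorem scoreAcc_fst_pos_or_subset_snd_iff (F : Finset V) (w : List V) {G : Finset V}
    (hG : G ⊆ F) :
    0 < (scoreAcc F w).1 ∨ G ⊆ (scoreAcc F w).2 ↔ ∃ S ∈ suffixOccs w, S ⊆ F ∧ G ⊆ S := by
  induction w using List.reverseRecOn generalizing G with
  | nil => simp [scoreAcc, suffixOccs]
  | append_singleton w v ih =>
    rw [scoreAcc_concat, suffixOccs_concat]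
    simp only [Set.mem_insert_iff, Set.mem_image, exists_eq_or_imp, exists_exists_and_eq_and,
      Finset.empty_subset, true_and, Finset.subset_empty, Finset.insert_subset_iff]
    by_cases hvF : v ∈ F
    · have hGv : G.erase v ⊆ F := (Finset.erase_subset v G).trans hG
      calc 0 < (mgStep F (scoreAcc F w) v).1 ∨ G ⊆ (mgStep F (scoreAcc F w) v).2
          ↔ 0 < (scoreAcc F w).1 ∨ G.erase v ⊆ (scoreAcc F w).2 := by
            rw [mgStep, if_pos hvF]
            split_ifs with hacc
            · simp [hacc, Finset.erase_subset_erase v hG]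
            · simp [Finset.subset_insert_iff]
        _ ↔ ∃ T ∈ suffixOccs w, T ⊆ F ∧ G.erase v ⊆ T := ih hGv
        _ ↔ G = ∅ ∨ ∃ T ∈ suffixOccs w, (v ∈ F ∧ T ⊆ F) ∧ G ⊆ insert v T := by
            simp only [hvF, true_and, Finset.subset_insert_iff]
            exact (or_iff_right_of_imp fun hG0 =>
              ⟨∅, empty_mem_suffixOccs w, Finset.empty_subset F, by simp [hG0]⟩).symm
    · simp [mgStep, hvF]

theorem scoreAcc_fst_pos_iff (F : Finset V) (w : List V) :
    0 < (scoreAcc F w).1 ↔ F.Nonempty ∧ F ∈ suffixOccs w := by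
  rcases F.eq_empty_or_nonempty with rfl | hF
  · simp [scoreAcc_empty]
  · have := scoreAcc_fst_pos_or_subset_snd_iff F w (subset_refl F)
    rw [or_iff_left (scoreAcc_snd_ssubset hF w).not_superset] at this
    simp [this, hF, ← Finset.Subset.antisymm_iff]

theorem nonempty_mem_suffixOccs_iff (F : Finset V) (l : List V) :
    F.Nonempty ∧ F ∈ suffixOccs l ↔
      ∃ i, 1 ≤ i ∧ i ≤ l.length ∧ F = (l.drop (l.length - i)).toFinset := by
  constructor
  · rintro ⟨hF, s, hs, rfl⟩
    have hs0 : s ≠ [] := List.toFinset_nonempty_iff s |>.1 hF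
    exact ⟨s.length, List.length_pos_iff.2 hs0, hs.length_le,
      by rw [← List.suffix_iff_eq_drop.1 hs]⟩
  · rintro ⟨i, hi, hil, rfl⟩
    refine ⟨(List.toFinset_nonempty_iff _).2 (List.ne_nil_of_length_pos ?_), _,
      List.drop_suffix _ _, rfl⟩
    simp only [List.length_drop]
    omega

end

theorem score_pos_iff_lar_suffix_general [DecidableEq V] (w : List V)
    (F : Finset V) :
    0 < (scoreAcc F w).1 ↔
      ∃ i, 1 ≤ i ∧ i ≤ (LARof w).length ∧
        F = ((LARof w).drop ((LARof w).length - i)).toFinset := by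
  rw [scoreAcc_fst_pos_iff, ← suffixOccs_LARof, nonempty_mem_suffixOccs_iff]

/-- If `LAR(w) = v_k ⋯ v_1`, then `Score_F(w) > 0` iff
`F = {v_1, …, v_i}` for some `1 ≤ i ≤ k`. (Here `{v_1, …, v_i}` is the set of
letters of the suffix of length `i` of `LAR w`.) -/
theorem score_pos_iff_lar_suffix [DecidableEq V] (w : List V) (hw : w ≠ [])
    (F : Finset V) :
    0 < (scoreAcc F w).1 ↔
      ∃ i, 1 ≤ i ∧ i ≤ (LARof w).length ∧
        F = ((LARof w).drop ((LARof w).length - i)).toFinset :=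
  score_pos_iff_lar_suffix_general w F
end

section
/- Let G be a game with vertex set V, let W ⊆ V, and let M = (M, init, upd) be a memory structure such that G ≤_M G'. If Player i has a positional winning strategy for G' from the set {(v, init(v)) : v ∈ W}, then Player i has a finite-state winning strategy with memory M for G from W. -/
/-- An arena: a directed graph without terminal vertices, with the positions `V0`
of Player 0; Player 1's positions are the complement. -/
structure Arena (V : Type*) where
  V0 : Set V
  E : V → V → Prop
  succ : ∀ v, ∃ u, E v u

/-- The positions of Player `i`. -/
def Arena.pos (A : Arena V) (i : Fin 2) : Set V := if i = 0 then A.V0 else A.V0ᶜ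

/-- An infinite play in the arena. -/
def IsPlay (A : Arena V) (ρ : ℕ → V) : Prop := ∀ n, A.E (ρ n) (ρ (n + 1))

/-- The prefix `ρ_0 ⋯ ρ_{n-1}` (of length `n`) of an infinite word. -/
def prefixList (ρ : ℕ → V) (n : ℕ) : List V := (List.range n).map ρ

/-- The set of letters occurring infinitely often. -/
def infSet (ρ : ℕ → V) : Set V := {v | ∀ N, ∃ n, N ≤ n ∧ ρ n = v}

/-- The infinity set as a finset. -/
noncomputable def infFinset [Fintype V] (ρ : ℕ → V) : Finset V :=
  (Set.toFinite (infSet ρ)).toFinset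

/-- A loop: a strongly connected subset, i.e. any two of its vertices are joined
by a path visiting only vertices of the set. -/
def IsLoop (A : Arena V) (C : Set V) : Prop :=
  ∀ u ∈ C, ∀ u' ∈ C, Relation.ReflTransGen (fun a b => A.E a b ∧ a ∈ C ∧ b ∈ C) u u'

/-- A strategy, given as a function from (history, current vertex) to the next
vertex, which must move along an edge. -/
def IsStrat (A : Arena V) (σ : List V → V → V) : Prop := ∀ w v, A.E v (σ w v)

/-- A play consistent with the strategy `σ` of Player `i`. -/
def ConsWith (A : Arena V) (i : Fin 2) (σ : List V → V → V) (ρ : ℕ → V) : Prop :=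
  IsPlay A ρ ∧ ∀ n, ρ n ∈ A.pos i → ρ (n + 1) = σ (prefixList ρ n) (ρ n)

/-- The winning region of Player `i` in the Muller game on `A` with winning
families `Fam 0`, `Fam 1`. -/
def MullerWinRegion [Fintype V] [DecidableEq V] (A : Arena V)
    (Fam : Fin 2 → Set (Finset V)) (i : Fin 2) : Set V :=
  {v | ∃ σ, IsStrat A σ ∧ ∀ ρ, ρ 0 = v → ConsWith A i σ ρ → infFinset ρ ∈ Fam i}

/-- `memState init upd w v` is the memory state `upd*(w · v)` reached after the
play prefix `w · v`. -/
def memState {M : Type*} (init : V → M) (upd : M → V → M) : List V → V → M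
  | [], v => init v
  | a :: l, v => upd (l.foldl upd (init a)) v

/-- The expanded arena `A × M` of an arena and a memory structure. -/
def prodArena {M : Type*} (A : Arena V) (upd : M → V → M) : Arena (V × M) where
  V0 := {p | p.1 ∈ A.V0}
  E p q := A.E p.1 q.1 ∧ upd p.2 q.1 = q.2
  succ p := by
    obtain ⟨u, hu⟩ := A.succ p.1
    exact ⟨(u, upd p.2 u), hu, rfl⟩

/-- The extended play in `A × M` of a play in `A`. -/
def extPlay {M : Type*} (init : V → M) (upd : M → V → M) (ρ : ℕ → V) : ℕ → V × M :=
  fun n => (ρ n, memState init upd (prefixList ρ n) (ρ n))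

/-- A play is winning for Player `i` iff it lies in `Win` (for `i = 0`), resp.
outside `Win` (for `i = 1`). -/
def WinFor {α : Type*} (Win : Set (ℕ → α)) (i : Fin 2) (ρ : ℕ → α) : Prop :=
  if i = 0 then ρ ∈ Win else ρ ∉ Win

/-- The winning region of Player 0 in the game `(A, Win)`. -/
def GameWin0 (A : Arena V) (Win : Set (ℕ → V)) : Set V :=
  {v | ∃ σ, IsStrat A σ ∧ ∀ ρ, ρ 0 = v → ConsWith A 0 σ ρ → ρ ∈ Win}

lemma memState_append {M : Type*} (init : V → M) (upd : M → V → M) :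
    ∀ (w : List V) (a v : V),
      memState init upd (w ++ [a]) v = upd (memState init upd w a) v
  | [], _, _ => rfl
  | _ :: _, _, _ => by simp [memState, List.foldl_append]

lemma prefixList_succ (ρ : ℕ → V) (n : ℕ) :
    prefixList ρ (n + 1) = prefixList ρ n ++ [ρ n] := by
  simp [prefixList, List.range_succ]

lemma prodPos_iff {M : Type*} (A : Arena V) (upd : M → V → M) (i : Fin 2)
    (p : V × M) : p ∈ (prodArena A upd).pos i ↔ p.1 ∈ A.pos i := by
  fin_cases i <;> simp [Arena.pos, prodArena, Set.mem_setOf_eq]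

/-- If `G ≤_𝔐 G'` (the arena of `G'` is the expanded arena
`A × M` and a play of `G` is won by the player winning the extended play in
`G'`), and Player `i` has a positional winning strategy for `G'` from
`{(v, init v) | v ∈ W}`, then Player `i` has a finite-state winning strategy
with memory `𝔐 = (M, init, upd)` for `G` from `W`. -/
theorem reduction_gives_memory {M : Type*} [Fintype V] [Finite M] (A : Arena V)
    (Win : Set (ℕ → V)) (Win' : Set (ℕ → V × M)) (init : V → M) (upd : M → V → M)
    (i : Fin 2) (W : Set V)
    (hred : ∀ ρ, IsPlay A ρ → (ρ ∈ Win ↔ extPlay init upd ρ ∈ Win'))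
    (hpos : ∃ σp : V × M → V × M,
      (∀ p ∈ (prodArena A upd).pos i, (prodArena A upd).E p (σp p)) ∧
      ∀ v ∈ W, ∀ ρ' : ℕ → V × M, ρ' 0 = (v, init v) → IsPlay (prodArena A upd) ρ' →
        (∀ n, ρ' n ∈ (prodArena A upd).pos i → ρ' (n + 1) = σp (ρ' n)) →
        WinFor Win' i ρ') :
    ∃ nxt : V → M → V, (∀ v m, A.E v (nxt v m)) ∧
      ∀ v ∈ W, ∀ ρ, ρ 0 = v →
        ConsWith A i (fun w u => nxt u (memState init upd w u)) ρ →
        WinFor Win i ρ := by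
  classical
  obtain ⟨σp, hσE, hσwin⟩ := hpos
  refine ⟨fun v m => if v ∈ A.pos i then (σp (v, m)).1 else Classical.choose (A.succ v),
    ?_, ?_⟩
  · intro v m
    by_cases h : v ∈ A.pos i
    · simp only [h, if_pos]
      exact ((hσE (v, m) ((prodPos_iff A upd i (v, m)).2 h)).1)
    · simp only [h, if_neg, not_false_iff]
      exact Classical.choose_spec (A.succ v)
  · intro v hv ρ h0 hcons
    obtain ⟨hplay, hc⟩ := hcons
    -- memory recurrence along the play
    have hmem : ∀ n, (extPlay init upd ρ (n + 1)).2 =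
        upd (extPlay init upd ρ n).2 (ρ (n + 1)) := by
      intro n
      simp only [extPlay]
      rw [prefixList_succ, memState_append]
    have hplay' : IsPlay (prodArena A upd) (extPlay init upd ρ) := by
      intro n
      exact ⟨hplay n, (hmem n).symm⟩
    have hcons' : ∀ n, extPlay init upd ρ n ∈ (prodArena A upd).pos i →
        extPlay init upd ρ (n + 1) = σp (extPlay init upd ρ n) := by
      intro n hn
      have hn' : ρ n ∈ A.pos i := (prodPos_iff A upd i _).1 hn
      have hstep := hc n hn'
      have hx : ρ (n + 1) = (σp (extPlay init upd ρ n)).1 := by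
        rw [hstep]; simp only [extPlay, hn', if_pos]
      have hE := hσE _ hn
      have : (σp (extPlay init upd ρ n)).2 =
          upd (extPlay init upd ρ n).2 (σp (extPlay init upd ρ n)).1 := hE.2.symm
      have h2 : (extPlay init upd ρ (n + 1)).2 = (σp (extPlay init upd ρ n)).2 := by
        rw [hmem n, this, hx]
      have h1 : (extPlay init upd ρ (n + 1)).1 = (σp (extPlay init upd ρ n)).1 := hx
      exact Prod.ext h1 h2
    have h0' : extPlay init upd ρ 0 = (v, init v) := by
      simp [extPlay, prefixList, memState, h0]
    have hwin' := hσwin v hv _ h0' hplay' hcons'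
    unfold WinFor at hwin' ⊢
    split_ifs with hi
    · simp only [hi, if_pos] at hwin'
      exact (hred ρ hplay).2 hwin'
    · simp only [hi, if_neg, not_false_iff] at hwin'
      exact fun h => hwin' ((hred ρ hplay).1 h)
end
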